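/- arXiv:1410.6746 — 7 statements merged into one kernel-verified Lean document; each statement's English description precedes it below -/
import Mathlib

section
/- If R is a commutative domain in which every pair (a,b) with b ≠ 0 has a terminating k-stage division chain for some positive integer k, then the function φ : R² → ℕ defined by φ(a,0) = 0 and φ(a,b) = the minimal k for which (a,b) has a terminating k-stage division chain, satisfies: for all (a,b) with b ≠ 0 there exists q ∈ R with φ(b, a - bq) < φ(a,b). -/
/-- A `k`-stage division chain starting from `(a, b)`: `s 0 = a`, `s 1 = b` are the
initial values (`r₋₁ = a`, `r₀ = b`), `q i` is the quotient `q_{i+1}`, `s (i+2)` is the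
remainder `r_{i+1}`. The last remainder `r_k` is `s (k+1)`. -/
def DivChain {R : Type*} [CommRing R] (a b : R) (k : ℕ) (q s : ℕ → R) : Prop :=
  s 0 = a ∧ s 1 = b ∧ ∀ i < k, s i = q i * s (i + 1) + s (i + 2)

theorem stmt_1 {R : Type*} [CommRing R] [IsDomain R]
    (H : ∀ a b : R, b ≠ 0 → ∃ k : ℕ, 0 < k ∧ ∃ q s : ℕ → R,
      DivChain a b k q s ∧ s (k + 1) = 0)
    (φ : R × R → ℕ)
    (hφ0 : ∀ a : R, φ (a, 0) = 0)
    (hφmin : ∀ a b : R, b ≠ 0 →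
      IsLeast {k : ℕ | ∃ q s : ℕ → R, DivChain a b k q s ∧ s (k + 1) = 0} (φ (a, b))) :
    ∀ a b : R, b ≠ 0 → ∃ q : R, φ (b, a - b * q) < φ (a, b) := by
  intro a b hb
  obtain ⟨hmem, hlb⟩ := hφmin a b hb
  obtain ⟨q, s, ⟨hs0, hs1, hrec⟩, hlast⟩ := hmem
  set k := φ (a, b) with hk
  -- k ≥ 1
  have hkpos : 0 < k := by
    rcases Nat.eq_zero_or_pos k with h0 | h
    · exfalso; rw [h0] at hlast; exact hb (hs1 ▸ hlast)
    · exact h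
  refine ⟨q 0, ?_⟩
  have hr : a - b * q 0 = s 2 := by
    have := hrec 0 hkpos
    rw [hs0, hs1] at this
    rw [this]; ring
  rcases eq_or_ne (s 2) 0 with h2 | h2
  · rw [hr, h2, hφ0]; exact hkpos
  · rw [hr]
    have : φ (b, s 2) ≤ k - 1 := by
      apply (hφmin b (s 2) h2).2
      refine ⟨fun i => q (i + 1), fun i => s (i + 1), ⟨hs1, rfl, ?_⟩, ?_⟩
      · intro i hi
        exact hrec (i + 1) (by omega)
      · show s (k - 1 + 1 + 1) = 0
        rw [show k - 1 + 1 + 1 = k + 1 from by omega]; exact hlast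
    omega
end

section
/- If R is a commutative domain in which every pair (a,b) with b ≠ 0 has a terminating division chain (of some finite length), then R is a Bézout domain: every finitely generated ideal of R is principal. -/
/-! Each division step `rᵢ₋₁ = qᵢ₊₁ rᵢ + rᵢ₊₁` leaves the ideal generated by two consecutive
remainders unchanged, so a terminating chain gives `(a, b) = (rₖ₋₁, 0) = (rₖ₋₁)`. Two-generated
ideals being principal, every finitely generated ideal is principal. -/

namespace DivChain

variable {R : Type*} [CommRing R] {a b : R} {k : ℕ} {q s : ℕ → R}

theorem span_pair_succ_eq (h : DivChain a b k q s) {i : ℕ} (hi : i < k) :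
    Ideal.span {s (i + 1), s (i + 2)} = Ideal.span {s i, s (i + 1)} := by
  rw [h.2.2 i hi, add_comm (q i * _), mul_comm (q i), Ideal.span_pair_add_right_mul,
    Ideal.span_pair_comm]

theorem span_pair_eq (h : DivChain a b k q s) {i : ℕ} (hi : i ≤ k) :
    Ideal.span {s i, s (i + 1)} = Ideal.span {a, b} := by
  induction i with
  | zero => rw [h.1, h.2.1]
  | succ i ih => rw [h.span_pair_succ_eq (by omega), ih (by omega)]

theorem span_pair_eq_span_singleton (h : DivChain a b k q s) (hk : s (k + 1) = 0) :
    Ideal.span {a, b} = Ideal.span {s k} := by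
  rw [← h.span_pair_eq le_rfl, hk, Ideal.span_pair_zero]

end DivChain

theorem isBezout_of_divChain {R : Type*} [CommRing R]
    (H : ∀ a b : R, b ≠ 0 → ∃ k : ℕ, ∃ q s : ℕ → R, DivChain a b k q s ∧ s (k + 1) = 0) :
    IsBezout R := by
  refine IsBezout.iff_span_pair_isPrincipal.mpr fun a b => ?_
  by_cases hb : b = 0
  · exact ⟨a, by rw [hb, Ideal.span_pair_zero]⟩
  · obtain ⟨k, q, s, hchain, hk⟩ := H a b hb
    exact ⟨s k, hchain.span_pair_eq_span_singleton hk⟩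

theorem stmt_2_general {R : Type*} [CommRing R]
    (H : ∀ a b : R, b ≠ 0 → ∃ k : ℕ, 0 < k ∧ ∃ q s : ℕ → R,
      DivChain a b k q s ∧ s (k + 1) = 0) :
    ∀ I : Ideal R, I.FG → I.IsPrincipal := by
  have : IsBezout R := isBezout_of_divChain fun a b hb => by
    obtain ⟨k, -, hchain⟩ := H a b hb
    exact ⟨k, hchain⟩
  exact IsBezout.isPrincipal_of_FG

theorem stmt_2 {R : Type*} [CommRing R] [IsDomain R]
    (H : ∀ a b : R, b ≠ 0 → ∃ k : ℕ, 0 < k ∧ ∃ q s : ℕ → R,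
      DivChain a b k q s ∧ s (k + 1) = 0) :
    ∀ I : Ideal R, I.FG → I.IsPrincipal :=
  stmt_2_general H
end

section
/- Fix τ = (τ_p)_{p prime} with τ_p ∈ ℤ_p (p-adic integers), and define R_τ = { h/n ∈ ℚ[x] : n ∈ ℕ \ {0}, h ∈ ℤ[x], and for every prime p, h(τ_p) ≡ 0 mod p^{v_p(n)} in ℤ_p }. Then R_τ is a subring of ℚ[x]. -/
open Polynomial

/-- The subset `R_τ` of `ℚ[X]`: quotients `h/n` with `h ∈ ℤ[X]`, `n` a positive integer,
such that for every prime `p` the evaluation `h(τ_p)` in the `p`-adic integers is divisible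
by `p ^ v_p(n)`. -/
def RtauSet (τ : ∀ p : {p : ℕ // p.Prime}, @PadicInt p.1 ⟨p.2⟩) : Set (Polynomial ℚ) :=
  {f | ∃ (h : Polynomial ℤ) (n : ℕ), n ≠ 0 ∧
    Polynomial.C (n : ℚ) * f = h.map (algebraMap ℤ ℚ) ∧
    ∀ p : {p : ℕ // p.Prime},
      letI : Fact p.1.Prime := ⟨p.2⟩
      ((p.1 : @PadicInt p.1 ⟨p.2⟩) ^ (n.factorization p.1)) ∣ Polynomial.aeval (τ p) h}

lemma rtau_cast_pow_dvd (p : {p : ℕ // p.Prime}) (n : ℕ) :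
    letI : Fact p.1.Prime := ⟨p.2⟩
    ((p.1 : @PadicInt p.1 ⟨p.2⟩) ^ (n.factorization p.1)) ∣ (n : @PadicInt p.1 ⟨p.2⟩) := by
  letI : Fact p.1.Prime := ⟨p.2⟩
  have h : ((p.1 ^ (n.factorization p.1) : ℕ) : @PadicInt p.1 ⟨p.2⟩) ∣ (n : @PadicInt p.1 ⟨p.2⟩) :=
    Nat.cast_dvd_cast (Nat.ordProj_dvd n p.1)
  push_cast at h
  exact h

/-- `R_τ` is a subring of `ℚ[X]`. -/
theorem stmt_6 (τ : ∀ p : {p : ℕ // p.Prime}, @PadicInt p.1 ⟨p.2⟩) :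
    ∃ S : Subring (Polynomial ℚ), (S : Set (Polynomial ℚ)) = RtauSet τ := by
  refine ⟨{ carrier := RtauSet τ, one_mem' := ?_, mul_mem' := ?_, zero_mem' := ?_,
            add_mem' := ?_, neg_mem' := ?_ }, rfl⟩
  · rintro a b ⟨h1, n1, hn1, he1, hd1⟩ ⟨h2, n2, hn2, he2, hd2⟩
    refine ⟨h1 * h2, n1 * n2, mul_ne_zero hn1 hn2, ?_, ?_⟩
    · have key : Polynomial.C (((n1 * n2 : ℕ)) : ℚ) * (a * b)
          = (Polynomial.C ((n1 : ℚ)) * a) * (Polynomial.C ((n2 : ℚ)) * b) := by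
        push_cast [Polynomial.C_mul]; ring
      rw [key, he1, he2, Polynomial.map_mul]
    · intro p
      letI : Fact p.1.Prime := ⟨p.2⟩
      rw [Nat.factorization_mul hn1 hn2]
      simp only [Finsupp.coe_add, Pi.add_apply, pow_add, map_mul]
      exact mul_dvd_mul (hd1 p) (hd2 p)
  · exact ⟨1, 1, one_ne_zero, by simp, fun p => by simp⟩
  · rintro a b ⟨h1, n1, hn1, he1, hd1⟩ ⟨h2, n2, hn2, he2, hd2⟩
    refine ⟨Polynomial.C (n2 : ℤ) * h1 + Polynomial.C (n1 : ℤ) * h2, n1 * n2,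
      mul_ne_zero hn1 hn2, ?_, ?_⟩
    · have key : Polynomial.C (((n1 * n2 : ℕ)) : ℚ) * (a + b)
          = Polynomial.C ((n2 : ℚ)) * (Polynomial.C ((n1 : ℚ)) * a)
            + Polynomial.C ((n1 : ℚ)) * (Polynomial.C ((n2 : ℚ)) * b) := by
        push_cast [Polynomial.C_mul]; ring
      rw [key, he1, he2, Polynomial.map_add, Polynomial.map_mul, Polynomial.map_mul]
      simp [Polynomial.map_C]
    · intro p
      letI : Fact p.1.Prime := ⟨p.2⟩
      rw [Nat.factorization_mul hn1 hn2]
      simp only [Finsupp.coe_add, Pi.add_apply, pow_add, map_add, map_mul, aeval_C]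
      have e1 : (algebraMap ℤ (@PadicInt p.1 ⟨p.2⟩)) (n2 : ℤ) = (n2 : @PadicInt p.1 ⟨p.2⟩) := by
        push_cast; rfl
      have e2 : (algebraMap ℤ (@PadicInt p.1 ⟨p.2⟩)) (n1 : ℤ) = (n1 : @PadicInt p.1 ⟨p.2⟩) := by
        push_cast; rfl
      rw [e1, e2]
      refine dvd_add ?_ ?_
      · rw [mul_comm ((p.1 : @PadicInt p.1 ⟨p.2⟩) ^ (n1.factorization p.1))]
        exact mul_dvd_mul (rtau_cast_pow_dvd p n2) (hd1 p)
      · exact mul_dvd_mul (rtau_cast_pow_dvd p n1) (hd2 p)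
  · exact ⟨0, 1, one_ne_zero, by simp, fun p => by simp⟩
  · rintro a ⟨h1, n1, hn1, he1, hd1⟩
    refine ⟨-h1, n1, hn1, ?_, fun p => ?_⟩
    · rw [Polynomial.map_neg, ← he1]; ring
    · letI : Fact p.1.Prime := ⟨p.2⟩
      rw [map_neg]
      exact (hd1 p).neg_right
end

section
/- For τ, σ ∈ ∏_p ℤ_p with τ ≠ σ, the subrings R_τ and R_σ of ℚ[x] are distinct (as subsets of ℚ[x]). -/
/-! The polynomial `(X - a) / p ^ k` lies in `R_τ` exactly when `a ≡ τ_p mod p ^ k`. Given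
`τ_p ≠ σ_p`, choose `k` larger than the valuation of `τ_p - σ_p` and `a` an approximation of
`τ_p` modulo `p ^ k`: then `(X - a) / p ^ k` lies in `R_τ` but not in `R_σ`. -/

open Polynomial

namespace PadicInt

variable {p : ℕ} [hp : Fact p.Prime]

theorem associated_natCast_pow_factorization {n : ℕ} (hn : n ≠ 0) :
    Associated ((p : ℤ_[p]) ^ n.factorization p) (n : ℤ_[p]) := by
  have hunit : IsUnit ((ordCompl[p] n : ℕ) : ℤ_[p]) :=
    isUnit_iff.mpr (norm_natCast_eq_one_iff.mpr (Nat.coprime_ordCompl hp.out hn))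
  refine ⟨hunit.unit, ?_⟩
  rw [IsUnit.unit_spec, ← Nat.cast_pow, ← Nat.cast_mul, Nat.ordProj_mul_ordCompl_eq_self]

theorem not_pow_succ_valuation_dvd {x : ℤ_[p]} (hx : x ≠ 0) :
    ¬ (p : ℤ_[p]) ^ (x.valuation + 1) ∣ x := by
  rw [← Ideal.mem_span_singleton, mem_span_pow_iff_le_valuation x hx]
  omega

theorem pow_dvd_sub_appr (x : ℤ_[p]) (k : ℕ) : (p : ℤ_[p]) ^ k ∣ x - (x.appr k : ℕ) :=
  Ideal.mem_span_singleton.mp (appr_spec k x)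

end PadicInt

section

variable {p : ℕ} [hp : Fact p.Prime]

theorem C_inv_pow_mul_X_sub_C_mem_RtauSet_iff (τ : ∀ q : {q : ℕ // q.Prime}, @PadicInt q.1 ⟨q.2⟩)
    (k : ℕ) (a : ℤ) :
    C ((p : ℚ) ^ k)⁻¹ * (X - C (a : ℚ)) ∈ RtauSet τ ↔ (p : ℤ_[p]) ^ k ∣ τ ⟨p, hp.out⟩ - a := by
  have hpk : (p : ℚ) ^ k ≠ 0 := pow_ne_zero _ (Nat.cast_ne_zero.mpr hp.out.ne_zero)
  constructor
  · rintro ⟨h, n, hn, hnf, hdvd⟩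
    have hpoly : (n : ℤ[X]) * (X - C a) = (p : ℤ[X]) ^ k * h := by
      have hunit : (p : ℚ[X]) ^ k * C ((p : ℚ) ^ k)⁻¹ = 1 := by
        rw [← C_eq_natCast, ← C_pow, ← C_mul, mul_inv_cancel₀ hpk, C_1]
      apply map_injective (algebraMap ℤ ℚ) (RingHom.injective_int _)
      rw [Polynomial.map_mul, Polynomial.map_mul, ← hnf, mul_left_comm, ← mul_assoc (map _ _)]
      simp [hunit]
    have heval : (n : ℤ_[p]) * (τ ⟨p, hp.out⟩ - a) = (p : ℤ_[p]) ^ k * aeval (τ ⟨p, hp.out⟩) h := by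
      simpa using congrArg (aeval (τ ⟨p, hp.out⟩)) hpoly
    obtain ⟨w, hw⟩ := ((PadicInt.associated_natCast_pow_factorization hn).dvd_iff_dvd_left).mp
      (hdvd ⟨p, hp.out⟩)
    refine ⟨w, mul_left_cancel₀ (Nat.cast_ne_zero.mpr hn) ?_⟩
    rw [heval, hw]
    ring
  · intro hdvd
    refine ⟨X - C a, p ^ k, pow_ne_zero _ hp.out.ne_zero, ?_, ?_⟩
    · rw [← mul_assoc, ← C_mul, Nat.cast_pow, mul_inv_cancel₀ hpk, C_1, one_mul]
      simp
    rintro ⟨q, hq⟩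
    rw [hp.out.factorization_pow]
    by_cases hqp : q = p
    · subst hqp
      simpa using hdvd
    · simp [Finsupp.single_eq_of_ne hqp]

end

/-- Distinct parameters `τ ≠ σ` yield distinct subrings `R_τ ≠ R_σ` of `ℚ[X]`. -/
theorem stmt_7 (τ σ : ∀ p : {p : ℕ // p.Prime}, @PadicInt p.1 ⟨p.2⟩) (hne : τ ≠ σ) :
    RtauSet τ ≠ RtauSet σ := by
  obtain ⟨⟨p, hp⟩, hτσ⟩ := Function.ne_iff.mp hne
  have : Fact p.Prime := ⟨hp⟩
  set k := (τ ⟨p, hp⟩ - σ ⟨p, hp⟩).valuation + 1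
  set a : ℤ := ↑((τ ⟨p, hp⟩).appr k)
  have hτa : (p : ℤ_[p]) ^ k ∣ τ ⟨p, hp⟩ - a := by
    simpa [a] using PadicInt.pow_dvd_sub_appr (τ ⟨p, hp⟩) k
  intro hR
  have hσa := (C_inv_pow_mul_X_sub_C_mem_RtauSet_iff σ k a).mp
    (hR ▸ (C_inv_pow_mul_X_sub_C_mem_RtauSet_iff τ k a).mpr hτa)
  apply PadicInt.not_pow_succ_valuation_dvd (sub_ne_zero.mpr hτσ)
  simpa only [sub_sub_sub_cancel_right] using dvd_sub hτa hσa
end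

section
/- Let q, r be elements of the positive cone R_τ⁺ of R_τ with r ≠ 0. Then there exist unique p, s ∈ R_τ⁺ with q = p·r + s and s < r (in the ordering of R_τ inherited from orderings of ℚ[x] by eventual sign). -/
/-!
Inside `ℚ[X]`, `R_τ` is a subring whose constants are exactly the integers and which meets
every coset `f + ℚ`: if `f = h / n`, a Chinese remainder argument over the primes dividing `n`
gives an integer `b` with `h(τ_p) ≡ b` modulo `p ^ v_p(n)` for all `p`, and then
`f - b / n ∈ R_τ`. The first property makes `R_τ` discrete for the ordering by the sign of
the leading coefficient: `d > 0` forces `d ≥ 1`, since either `deg d > 0` or `d` is a positive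
integer.

Dividing `q` by `r` in `ℚ[X]` gives `q = p₀ r + s₀` with `deg s₀ < deg r`; shifting `p₀` by
a rational constant `e ∈ [0, 1]` moves it into `R_τ` and puts the remainder `s₀ + e r` in
`[0, r)`. Discreteness then yields `p ≥ 0` and uniqueness: two such divisions have
`-1 < p - p' < 1`.
-/

open Polynomial

instance (p : {p : ℕ // p.Prime}) : Fact p.1.Prime := ⟨p.2⟩

section Padic

variable {p : ℕ} [Fact p.Prime]

theorem PadicInt.pow_factorization_dvd_natCast (n : ℕ) :
    (p : ℤ_[p]) ^ n.factorization p ∣ (n : ℤ_[p]) := by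
  exact_mod_cast Nat.cast_dvd_cast (Nat.ordProj_dvd n p)

theorem PadicInt.pow_dvd_intCast_iff {k : ℕ} {m : ℤ} :
    (p : ℤ_[p]) ^ k ∣ (m : ℤ_[p]) ↔ (p : ℤ) ^ k ∣ m := by
  rw [← PadicInt.norm_int_le_pow_iff_dvd, PadicInt.norm_le_pow_iff_mem_span_pow,
    Ideal.mem_span_singleton]

end Padic

theorem exists_int_forall_pow_factorization_dvd_sub (n : ℕ)
    (x : ∀ p : {p : ℕ // p.Prime}, ℤ_[p.1]) :
    ∃ b : ℤ, ∀ p, (p.1 : ℤ_[p.1]) ^ n.factorization p.1 ∣ x p - b := by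
  classical
  let k p := n.factorization (p : {p : ℕ // p.Prime}).1
  obtain ⟨b, hb⟩ := Nat.chineseRemainderOfFinset (fun p => (x p).appr (k p))
    (fun p => p.1 ^ k p) (n.primeFactors.subtype Nat.Prime)
    (fun p _ => pow_ne_zero _ p.2.ne_zero)
    (fun p _ q _ hpq => Nat.coprime_pow_primes _ _ p.2 q.2 (Subtype.coe_ne_coe.mpr hpq))
  refine ⟨b, fun p => ?_⟩
  by_cases hp : p ∈ n.primeFactors.subtype Nat.Prime
  · have happr : (p.1 : ℤ_[p.1]) ^ k p ∣ x p - (x p).appr (k p) :=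
      Ideal.mem_span_singleton.mp ((x p).appr_spec (k p))
    have hcrt : (p.1 : ℤ_[p.1]) ^ k p ∣ (((x p).appr (k p) : ℤ) - (b : ℤ) : ℤ) := by
      rw [PadicInt.pow_dvd_intCast_iff]
      exact_mod_cast (Nat.modEq_iff_dvd.mp (hb p hp))
    have := dvd_add happr hcrt
    push_cast at this
    simpa using this
  · have hk : n.factorization p.1 = 0 := by
      rw [Finset.mem_subtype, Nat.mem_primeFactors] at hp
      exact Nat.factorization_eq_zero_iff _ _ |>.mpr (by tauto)
    simp [hk]

theorem Polynomial.C_natCast_mul_add_eq_map {f g : ℚ[X]} {h k : ℤ[X]} {n m : ℕ}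
    (hfh : C (n : ℚ) * f = h.map (algebraMap ℤ ℚ))
    (hgk : C (m : ℚ) * g = k.map (algebraMap ℤ ℚ)) :
    C ((n * m : ℕ) : ℚ) * (f + g) = (m * h + n * k).map (algebraMap ℤ ℚ) := by
  rw [Polynomial.map_add, Polynomial.map_mul, Polynomial.map_mul, ← hfh, ← hgk,
    Polynomial.map_natCast, Polynomial.map_natCast, ← C_eq_natCast, ← C_eq_natCast]
  push_cast
  rw [C_mul]
  ring

theorem Polynomial.exists_natCast_mul_eq_map_intCast (f : ℚ[X]) :
    ∃ (n : ℕ) (h : ℤ[X]), n ≠ 0 ∧ C (n : ℚ) * f = h.map (algebraMap ℤ ℚ) := by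
  induction f using Polynomial.induction_on' with
  | monomial k a =>
    refine ⟨a.den, monomial k a.num, a.den_nz, ?_⟩
    rw [Polynomial.map_monomial, C_mul_monomial, mul_comm]
    exact_mod_cast congrArg (monomial k) (Rat.mul_den_eq_num a)
  | add f g hf hg =>
    obtain ⟨n, h, hn, hfh⟩ := hf
    obtain ⟨m, k, hm, hgk⟩ := hg
    exact ⟨n * m, m * h + n * k, mul_ne_zero hn hm, C_natCast_mul_add_eq_map hfh hgk⟩

theorem Int.natCast_dvd_of_forall_pow_factorization_dvd {n : ℕ} {c : ℤ} (hn : n ≠ 0)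
    (h : ∀ p : ℕ, p.Prime → (p : ℤ) ^ n.factorization p ∣ c) : (n : ℤ) ∣ c := by
  rw [Int.natCast_dvd, Nat.dvd_iff_prime_pow_dvd_dvd]
  intro p k hp hpk
  refine (Nat.pow_dvd_pow p ((hp.pow_dvd_iff_le_factorization hn).mp hpk)).trans ?_
  exact Int.natCast_dvd.mp (by exact_mod_cast h p hp)

section Rtau

variable (τ : ∀ p : {p : ℕ // p.Prime}, ℤ_[p.1])

theorem one_mem_RtauSet : (1 : ℚ[X]) ∈ RtauSet τ :=
  ⟨1, 1, one_ne_zero, by simp, fun p => by simp⟩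

theorem neg_mem_RtauSet {f : ℚ[X]} (hf : f ∈ RtauSet τ) : -f ∈ RtauSet τ := by
  obtain ⟨h, n, hn, hfh, hdvd⟩ := hf
  exact ⟨-h, n, hn, by rw [mul_neg, hfh, Polynomial.map_neg], fun p => by simpa using hdvd p⟩

theorem add_mem_RtauSet {f g : ℚ[X]} (hf : f ∈ RtauSet τ) (hg : g ∈ RtauSet τ) :
    f + g ∈ RtauSet τ := by
  obtain ⟨h, n, hn, hfh, hh⟩ := hf
  obtain ⟨k, m, hm, hgk, hk⟩ := hg
  refine ⟨m * h + n * k, n * m, mul_ne_zero hn hm, C_natCast_mul_add_eq_map hfh hgk,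
    fun p => ?_⟩
  rw [Nat.factorization_mul hn hm, Finsupp.add_apply, pow_add, map_add, map_mul, map_mul,
    map_natCast, map_natCast, mul_comm (m : ℤ_[p.1])]
  exact dvd_add (mul_dvd_mul (hh p) (PadicInt.pow_factorization_dvd_natCast m))
    (mul_dvd_mul (PadicInt.pow_factorization_dvd_natCast n) (hk p))

theorem mul_mem_RtauSet {f g : ℚ[X]} (hf : f ∈ RtauSet τ) (hg : g ∈ RtauSet τ) :
    f * g ∈ RtauSet τ := by
  obtain ⟨h, n, hn, hfh, hh⟩ := hf
  obtain ⟨k, m, hm, hgk, hk⟩ := hg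
  refine ⟨h * k, n * m, mul_ne_zero hn hm, ?_, fun p => ?_⟩
  · rw [Polynomial.map_mul, ← hfh, ← hgk]
    push_cast
    rw [C_mul]
    ring
  · rw [Nat.factorization_mul hn hm, Finsupp.add_apply, pow_add, map_mul]
    exact mul_dvd_mul (hh p) (hk p)

def Rtau : Subring ℚ[X] where
  carrier := RtauSet τ
  one_mem' := one_mem_RtauSet τ
  zero_mem' := ⟨0, 1, one_ne_zero, by simp, fun p => by simp⟩
  add_mem' := add_mem_RtauSet τ
  mul_mem' := mul_mem_RtauSet τ
  neg_mem' := neg_mem_RtauSet τ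

theorem exists_sub_C_mem_Rtau (f : ℚ[X]) : ∃ c : ℚ, f - C c ∈ Rtau τ := by
  obtain ⟨n, h, hn, hfh⟩ := f.exists_natCast_mul_eq_map_intCast
  obtain ⟨b, hb⟩ := exists_int_forall_pow_factorization_dvd_sub n (fun p => aeval (τ p) h)
  refine ⟨b / n, h - C b, n, hn, ?_, fun p => by simpa using hb p⟩
  rw [mul_sub, hfh, ← C_mul, mul_div_cancel₀ _ (by exact_mod_cast hn), Polynomial.map_sub,
    map_C, algebraMap_int_eq, eq_intCast]

theorem exists_intCast_eq_of_C_mem_Rtau {a : ℚ} (ha : C a ∈ Rtau τ) : ∃ m : ℤ, a = m := by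
  obtain ⟨h, n, hn, hah, hdvd⟩ := ha
  have hconst : h = C (h.coeff 0) := by
    apply eq_C_of_natDegree_eq_zero
    rw [← natDegree_map_eq_of_injective (algebraMap ℤ ℚ).injective_int, ← hah, ← C_mul,
      natDegree_C]
  have hna : (n : ℚ) * a = h.coeff 0 := by
    simpa using congrArg (coeff · 0) hah
  obtain ⟨m, hm⟩ : (n : ℤ) ∣ h.coeff 0 := by
    refine Int.natCast_dvd_of_forall_pow_factorization_dvd hn fun p hp => ?_
    have : Fact p.Prime := ⟨hp⟩
    have := hdvd ⟨p, hp⟩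
    rw [hconst, aeval_C, algebraMap_int_eq, eq_intCast] at this
    exact PadicInt.pow_dvd_intCast_iff.mp this
  refine ⟨m, mul_left_cancel₀ (Nat.cast_ne_zero.mpr hn : (n : ℚ) ≠ 0) ?_⟩
  rw [hna, hm]
  push_cast
  ring

end Rtau

namespace Polynomial

variable {R : Type*} [CommRing R] [LinearOrder R] [IsStrictOrderedRing R]

theorem leadingCoeff_add_pos {f g : R[X]} (hf : 0 < f.leadingCoeff)
    (hg : 0 ≤ g.leadingCoeff) : 0 < (f + g).leadingCoeff := by
  rcases hg.eq_or_lt with hg | hg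
  · rw [leadingCoeff_eq_zero.mp hg.symm, add_zero]
    exact hf
  rcases lt_trichotomy f.degree g.degree with h | h | h
  · rwa [leadingCoeff_add_of_degree_lt h]
  · rw [leadingCoeff_add_of_degree_eq h (by positivity)]
    positivity
  · rwa [leadingCoeff_add_of_degree_lt' h]

variable {s r : R[X]} {e : R}

theorem leadingCoeff_add_C_mul_nonneg (hs : s.degree < r.degree) (hr : 0 < r.leadingCoeff)
    (he : 0 ≤ e) (hs0 : e = 0 → 0 ≤ s.leadingCoeff) :
    0 ≤ (s + C e * r).leadingCoeff := by
  rcases he.eq_or_lt with rfl | he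
  · simpa using hs0 rfl
  rw [add_comm, leadingCoeff_add_of_degree_lt' (by rwa [degree_C_mul he.ne']),
    leadingCoeff_mul, leadingCoeff_C]
  positivity

theorem leadingCoeff_sub_add_C_mul_pos (hs : s.degree < r.degree) (hr : 0 < r.leadingCoeff)
    (he : e ≤ 1) (hs1 : e = 1 → s.leadingCoeff < 0) :
    0 < (r - (s + C e * r)).leadingCoeff := by
  have hsub : r - (s + C e * r) = C (1 - e) * r + -s := by rw [C_sub, C_1]; ring
  rcases he.eq_or_lt with rfl | he
  · simpa using hs1 rfl
  rw [hsub, leadingCoeff_add_of_degree_lt' (by rwa [degree_neg, degree_C_mul (by linarith)]),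
    leadingCoeff_mul, leadingCoeff_C]
  exact mul_pos (by linarith) hr

end Polynomial

theorem Int.exists_add_intCast_mem_Icc {R : Type*} [CommRing R] [LinearOrder R]
    [IsStrictOrderedRing R] [FloorRing R] (c : R) (P : Prop) :
    ∃ m : ℤ, 0 ≤ c + m ∧ c + m ≤ 1 ∧ (c + m = 0 → P) ∧ (c + m = 1 → ¬P) := by
  by_cases hP : P
  · have h0 := Int.fract_nonneg c
    have h1 := Int.fract_lt_one c
    rw [Int.fract, sub_eq_add_neg, ← Int.cast_neg] at h0 h1
    exact ⟨-⌊c⌋, h0, h1.le, fun _ => hP, fun h => absurd h h1.ne⟩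
  · have h0 := Int.ceil_lt_add_one c
    have h1 := Int.le_ceil c
    refine ⟨1 - ⌈c⌉, by push_cast; linarith, by push_cast; linarith, fun h => ?_, fun _ => hP⟩
    push_cast at h
    linarith

section DiscreteSubring

variable {S : Subring ℚ[X]}

theorem leadingCoeff_sub_one_nonneg_of_mem (hS : ∀ a : ℚ, C a ∈ S → ∃ m : ℤ, a = m)
    {d : ℚ[X]} (hd : d ∈ S) (hpos : 0 < d.leadingCoeff) : 0 ≤ (d - 1).leadingCoeff := by
  by_cases hdeg : 0 < d.degree
  · rw [leadingCoeff_sub_of_degree_lt (by rwa [degree_one])]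
    exact hpos.le
  obtain ⟨a, rfl⟩ : ∃ a, d = C a := ⟨_, eq_C_of_degree_le_zero (not_lt.mp hdeg)⟩
  obtain ⟨m, rfl⟩ := hS a hd
  rw [leadingCoeff_C] at hpos
  rw [← C_1, ← C_sub, leadingCoeff_C, sub_nonneg]
  exact_mod_cast Int.cast_pos.mp hpos

theorem leadingCoeff_nonpos_of_mul_add_eq (hS : ∀ a : ℚ, C a ∈ S → ∃ m : ℤ, a = m)
    {x r a b : ℚ[X]} (hx : x ∈ S) (hr : 0 ≤ r.leadingCoeff) (ha : 0 ≤ a.leadingCoeff)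
    (hb : 0 < (r - b).leadingCoeff) (h : x * r + a = b) : x.leadingCoeff ≤ 0 := by
  by_contra! hx0
  have hx1 : 0 ≤ ((x - 1) * r).leadingCoeff := by
    rw [leadingCoeff_mul]
    exact mul_nonneg (leadingCoeff_sub_one_nonneg_of_mem hS hx hx0) hr
  have hsum := leadingCoeff_add_pos (leadingCoeff_add_pos hb hx1) ha
  rw [show r - b + (x - 1) * r + a = 0 by linear_combination h, leadingCoeff_zero] at hsum
  exact hsum.false

theorem exists_mul_add_of_leadingCoeff_nonneg (hS : ∀ a : ℚ, C a ∈ S → ∃ m : ℤ, a = m)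
    (hA : ∀ f : ℚ[X], ∃ c : ℚ, f - C c ∈ S) {q r : ℚ[X]} (hq : q ∈ S) (hr : r ∈ S)
    (hq0 : 0 ≤ q.leadingCoeff) (hr0 : 0 < r.leadingCoeff) :
    ∃ p s : ℚ[X], p ∈ S ∧ s ∈ S ∧ 0 ≤ p.leadingCoeff ∧ 0 ≤ s.leadingCoeff ∧
      q = p * r + s ∧ 0 < (r - s).leadingCoeff := by
  obtain ⟨c, hc⟩ := hA (q / r)
  obtain ⟨m, he0, he1, hs0, hs1⟩ :=
    Int.exists_add_intCast_mem_Icc c (0 ≤ (q % r).leadingCoeff)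
  set p := q / r - C (c + m) with hp_def
  have hp : p ∈ S := by
    rw [hp_def, C_add, ← sub_sub, C_eq_intCast]
    exact S.sub_mem hc (intCast_mem S m)
  have hdeg : (q % r).degree < r.degree := degree_mod_lt q (leadingCoeff_ne_zero.mp hr0.ne')
  have hs : q - p * r = q % r + C (c + m) * r := by
    rw [hp_def]
    linear_combination -EuclideanDomain.div_add_mod q r
  have hrs : 0 < (r - (q - p * r)).leadingCoeff := by
    rw [hs]
    exact leadingCoeff_sub_add_C_mul_pos hdeg hr0 he1 fun h => not_le.mp (hs1 h)
  refine ⟨p, q - p * r, hp, S.sub_mem hq (S.mul_mem hp hr), ?_, ?_, by ring, hrs⟩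
  · have := leadingCoeff_nonpos_of_mul_add_eq hS (S.neg_mem hp) hr0.le hq0 hrs (by ring)
    rwa [leadingCoeff_neg, neg_nonpos] at this
  · rw [hs]
    exact leadingCoeff_add_C_mul_nonneg hdeg hr0 he0 hs0

theorem eq_of_mul_add_eq_mul_add (hS : ∀ a : ℚ, C a ∈ S → ∃ m : ℤ, a = m)
    {p p' r s s' : ℚ[X]} (hp : p ∈ S) (hp' : p' ∈ S) (hr : 0 ≤ r.leadingCoeff)
    (hs : 0 ≤ s.leadingCoeff) (hs' : 0 ≤ s'.leadingCoeff) (hrs : 0 < (r - s).leadingCoeff)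
    (hrs' : 0 < (r - s').leadingCoeff) (h : p * r + s = p' * r + s') : p = p' := by
  have h₁ := leadingCoeff_nonpos_of_mul_add_eq hS (S.sub_mem hp hp') hr hs hrs'
    (by linear_combination h)
  have h₂ := leadingCoeff_nonpos_of_mul_add_eq hS (S.sub_mem hp' hp) hr hs' hrs
    (by linear_combination -h)
  rw [← neg_sub, leadingCoeff_neg, neg_nonpos] at h₂
  exact sub_eq_zero.mp (leadingCoeff_eq_zero.mp (le_antisymm h₁ h₂))

end DiscreteSubring

/-- In the ordering of `R_τ` by sign of the leading coefficient, division with remainder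
is possible and unique within the positive cone: for `q, r ≥ 0` with `r ≠ 0` there are
unique `p, s ≥ 0` in `R_τ` with `q = p * r + s` and `s < r`. -/
theorem stmt_12 (τ : ∀ p : {p : ℕ // p.Prime}, @PadicInt p.1 ⟨p.2⟩)
    (q r : Polynomial ℚ) (hq : q ∈ RtauSet τ) (hr : r ∈ RtauSet τ)
    (hq0 : 0 ≤ q.leadingCoeff) (hr0 : 0 < r.leadingCoeff) :
    ∃! z : Polynomial ℚ × Polynomial ℚ,
      z.1 ∈ RtauSet τ ∧ z.2 ∈ RtauSet τ ∧
      0 ≤ z.1.leadingCoeff ∧ 0 ≤ z.2.leadingCoeff ∧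
      q = z.1 * r + z.2 ∧ 0 < (r - z.2).leadingCoeff := by
  have hS : ∀ a : ℚ, C a ∈ Rtau τ → ∃ m : ℤ, a = m :=
    fun _ => exists_intCast_eq_of_C_mem_Rtau τ
  obtain ⟨p, s, hp, hs, hp0, hs0, hqps, hrs⟩ :=
    exists_mul_add_of_leadingCoeff_nonneg hS (exists_sub_C_mem_Rtau τ) hq hr hq0 hr0
  refine ⟨(p, s), ⟨hp, hs, hp0, hs0, hqps, hrs⟩, ?_⟩
  rintro ⟨p', s'⟩ ⟨hp', hs', -, hs0', hqps', hrs'⟩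
  have hps : p' * r + s' = p * r + s := hqps'.symm.trans hqps
  obtain rfl := eq_of_mul_add_eq_mul_add hS hp' hp hr0.le hs0' hs0 hrs' hrs hps
  obtain rfl := add_left_cancel hps
  rfl
end

section
/- Let a, b > 0 in ℤ, let (q₁,...,q_k; r₁,...,r_k) be a division chain starting from (a,b) with q_i > 0 for all i > 1, and let (e₁,...,e_m; f₁,...,f_m) be the Euclidean division chain starting from (a,b) (i.e., e_{i+1} = f_{i-1} div f_i, f_{i+1} = f_{i-1} mod f_i, with f₋₁ = a, f₀ = b, f_m = 0). If m ≥ k, then |r_k| ≥ f_{k+1} (where f_{k+1} = 0 if m = k). -/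
/-- The Euclidean division chain starting from `(a, b)` in `ℤ`: `f 0 = a`, `f 1 = b`
(i.e. `f₋₁ = a`, `f₀ = b`), each next remainder is obtained by Euclidean division,
the remainders `f 1, f 2, …` are nonzero up to index `m + 1` exclusively, and
`f (m + 1) = 0` (i.e. `f_m = 0`). -/
def EuclidChain (a b : ℤ) (m : ℕ) (f : ℕ → ℤ) : Prop :=
  f 0 = a ∧ f 1 = b ∧ (∀ i < m, f (i + 2) = f i % f (i + 1)) ∧
    (∀ i ≤ m, f i ≠ 0) ∧ f (m + 1) = 0

/-- The abstract Euclid remainder sequence: `eucl n x y` is the `n`-th term of the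
sequence `x, y, x % y, …`, cut off at `0` once the second component vanishes. -/
def eucl : ℕ → ℤ → ℤ → ℤ
  | 0, x, _ => x
  | n + 1, x, y => if y = 0 then 0 else eucl n y (x % y)

lemma eucl_zero (x y : ℤ) : eucl 0 x y = x := rfl

lemma eucl_succ (n : ℕ) (x y : ℤ) :
    eucl (n + 1) x y = if y = 0 then 0 else eucl n y (x % y) := rfl

lemma eucl_succ_of_ne (n : ℕ) (x : ℤ) {y : ℤ} (hy : y ≠ 0) :
    eucl (n + 1) x y = eucl n y (x % y) := by simp [eucl_succ, hy]

lemma eucl_succ_zero (n : ℕ) (x : ℤ) : eucl (n + 1) x 0 = 0 := by simp [eucl_succ]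

lemma eucl_one (x y : ℤ) : eucl 1 x y = y := by
  by_cases hy : y = 0 <;> simp [eucl_succ, hy, eucl_zero]

lemma eucl_nonneg : ∀ (n : ℕ) (x y : ℤ), 0 ≤ x → 0 ≤ y → 0 ≤ eucl n x y := by
  intro n
  induction n with
  | zero => intro x y hx _; simpa [eucl_zero] using hx
  | succ n ih =>
    intro x y hx hy
    by_cases hy0 : y = 0
    · simp [eucl_succ, hy0]
    · rw [eucl_succ_of_ne n x hy0]
      exact ih y (x % y) hy (Int.emod_nonneg x hy0)

lemma eucl_succ_le : ∀ (n : ℕ), 1 ≤ n → ∀ (x y : ℤ), 0 ≤ y →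
    eucl (n + 1) x y ≤ eucl n x y := by
  intro n
  induction n with
  | zero => intro h; omega
  | succ n ih =>
    intro _ x y hy
    by_cases hy0 : y = 0
    · simp [hy0, eucl_succ_zero]
    · rw [eucl_succ_of_ne (n + 1) x hy0, eucl_succ_of_ne n x hy0]
      rcases Nat.eq_zero_or_pos n with hn | hn
      · subst hn
        rw [eucl_one, eucl_zero]
        exact (Int.emod_lt_of_pos x (lt_of_le_of_ne hy (Ne.symm hy0))).le
      · exact ih hn y (x % y) (Int.emod_nonneg x hy0)

lemma eucl_anti {n n' : ℕ} (hn : 1 ≤ n) (hnn : n ≤ n') (x y : ℤ) (hy : 0 ≤ y) :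
    eucl n' x y ≤ eucl n x y := by
  induction n' with
  | zero => omega
  | succ n' ih =>
    rcases Nat.lt_or_ge n (n' + 1) with h | h
    · have h1 : n ≤ n' := by omega
      exact le_trans (eucl_succ_le n' (by omega) x y hy) (ih h1)
    · have : n = n' + 1 := by omega
      subst this; exact le_refl _

/-- Reducing the second argument mod the first only decreases the sequence. -/
lemma eucl_emod_le (n : ℕ) (x y : ℤ) (hx : 0 < x) (hy : 0 ≤ y) :
    eucl n x (y % x) ≤ eucl n x y := by
  rcases lt_trichotomy y x with h | h | h
  · rw [Int.emod_eq_of_lt hy h]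
  · rw [h, Int.emod_self]
    cases n with
    | zero => simp [eucl_zero]
    | succ n => simpa [eucl_succ_zero] using eucl_nonneg (n + 1) x x hx.le hx.le
  · -- x < y
    have hyx : 0 ≤ y % x := Int.emod_nonneg y hx.ne'
    match n with
    | 0 => simp [eucl_zero]
    | 1 =>
      rw [eucl_one, eucl_one]
      have := Int.emod_lt_of_pos y hx
      omega
    | (n + 2) =>
      have hy0 : y ≠ 0 := by omega
      have hrhs : eucl (n + 2) x y = eucl n x (y % x) := by
        rw [eucl_succ_of_ne (n + 1) x hy0,
          Int.emod_eq_of_lt hx.le h, eucl_succ_of_ne n y hx.ne']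
      rw [hrhs]
      rcases Nat.eq_zero_or_pos n with hn | hn
      · subst hn
        rw [eucl_zero]
        calc eucl 2 x (y % x) ≤ eucl 1 x (y % x) := eucl_succ_le 1 le_rfl x _ hyx
          _ = y % x := eucl_one x _
          _ ≤ x := (Int.emod_lt_of_pos y hx).le
      · exact eucl_anti hn (by omega) x (y % x) hyx

/-- `x % y ≤ x` for `0 ≤ x`, `0 < y`. -/
lemma int_emod_le_self {x y : ℤ} (hx : 0 ≤ x) (hy : 0 < y) : x % y ≤ x := by
  have h3 := Int.emod_lt_of_pos x hy
  have h4 := Int.emod_nonneg x hy.ne'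
  have h5 := Int.emod_def x y
  have h6 : 0 ≤ x / y := Int.ediv_nonneg hx hy.le
  nlinarith

/-- With `0 < r < c`, `c % r ≤ c - r`. -/
lemma int_emod_le_sub {c r : ℤ} (hr : 0 < r) (hrc : r < c) : c % r ≤ c - r := by
  have h5 := Int.emod_def c r
  have h6 : 1 ≤ c / r := by
    rw [Int.le_ediv_iff_mul_le hr]; omega
  nlinarith

/-- Sign-alternation: once two consecutive elements of a division chain with positive
quotients have strictly opposite signs, absolute values never drop below `|t 1|`. -/
lemma alt_chain : ∀ (k : ℕ) (t p : ℕ → ℤ),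
    (∀ i < k, t i = p i * t (i + 1) + t (i + 2)) → (∀ i < k, 1 ≤ p i) →
    ((0 < t 0 ∧ t 1 < 0) ∨ (t 0 < 0 ∧ 0 < t 1)) → |t 1| ≤ |t (k + 1)| := by
  intro k
  induction k with
  | zero => intro t p _ _ _; exact le_refl _
  | succ k ih =>
    intro t p hrel hp hsign
    have h0 : t 0 = p 0 * t 1 + t 2 := hrel 0 (by omega)
    have hp0 : 1 ≤ p 0 := hp 0 (by omega)
    have key := ih (fun i => t (i + 1)) (fun i => p (i + 1))
      (fun i hi => hrel (i + 1) (by omega)) (fun i hi => hp (i + 1) (by omega))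
    rcases hsign with ⟨h1, h2⟩ | ⟨h1, h2⟩
    · -- t 0 > 0, t 1 < 0, so t 2 = t 0 - p 0 * t 1 ≥ t 0 - t 1 > -t 1 > 0
      have hmul : p 0 * t 1 ≤ t 1 := by nlinarith
      have ht2 : -t 1 < t 2 := by omega
      have ht2p : (0:ℤ) < t 2 := by omega
      have := key (Or.inr ⟨h2, ht2p⟩)
      have habs : |t 1| ≤ |t 2| := by
        rw [abs_of_neg h2, abs_of_pos (by omega : 0 < t 2)]; omega
      exact habs.trans this
    · -- t 0 < 0, t 1 > 0, so t 2 = t 0 - p 0 * t 1 ≤ t 0 - t 1 < -t 1 < 0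
      have hmul : t 1 ≤ p 0 * t 1 := by nlinarith
      have ht2 : t 2 < -t 1 := by omega
      have ht2n : t 2 < 0 := by omega
      have := key (Or.inl ⟨h2, ht2n⟩)
      have habs : |t 1| ≤ |t 2| := by
        rw [abs_of_pos h2, abs_of_neg (by omega : t 2 < 0)]; omega
      exact habs.trans this

/-- If the absolute value of an integer `z` is positive and `z % c = r ≠ 0` with
`0 < c`, then `c - r ≤ -z` when `z < 0`. -/
lemma neg_ge_of_emod {z c r : ℤ} (hc : 0 < c) (hz : z < 0) (hzr : z % c = r)
    (hr : 0 < r) : c - r ≤ -z := by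
  have hd : z % c = z - c * (z / c) := Int.emod_def z c
  have h1 : (-z) % c = (c - r) % c := by
    conv_lhs => rw [show -z = (c - r) + c * (-(z/c) - 1) by rw [← hzr, hd]; ring]
    rw [Int.add_mul_emod_self_left]
  have hr2 : r < c := hzr ▸ Int.emod_lt_of_pos z hc
  have h2 : (c - r) % c = c - r := Int.emod_eq_of_lt (by omega) (by omega)
  have h3 : (-z) % c ≤ -z := int_emod_le_self (by omega) hc
  omega

/-- Main lemma: a division chain from positive `(u, c)` with all quotients `≥ 1`
has `|s (k+1)| ≥ eucl (k+2) u c`. -/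
lemma main_lemma : ∀ (k : ℕ) (s p : ℕ → ℤ),
    (∀ i < k, s i = p i * s (i + 1) + s (i + 2)) → (∀ i < k, 1 ≤ p i) →
    0 < s 0 → 0 < s 1 → eucl (k + 2) (s 0) (s 1) ≤ |s (k + 1)| := by
  intro k
  induction k with
  | zero =>
    intro s p _ _ hu hc
    rw [eucl_succ_of_ne 1 (s 0) hc.ne', eucl_one, abs_of_pos hc]
    exact (Int.emod_lt_of_pos (s 0) hc).le
  | succ k ih =>
    intro s p hrel hp hu hc
    have h0 : s 0 = p 0 * s 1 + s 2 := hrel 0 (by omega)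
    have hs2mod : s 2 % s 1 = s 0 % s 1 := by
      conv_rhs => rw [show s 0 = s 2 + s 1 * p 0 by linear_combination h0]
      rw [Int.add_mul_emod_self_left]
    have hunf : eucl (k + 1 + 2) (s 0) (s 1) = eucl (k + 2) (s 1) (s 0 % s 1) :=
      eucl_succ_of_ne (k + 2) (s 0) hc.ne'
    have hrel' : ∀ i < k, (fun j => s (j + 1)) i
        = (fun j => p (j + 1)) i * (fun j => s (j + 1)) (i + 1)
          + (fun j => s (j + 1)) (i + 2) := fun i hi => hrel (i + 1) (by omega)
    have hp' : ∀ i < k, 1 ≤ (fun j => p (j + 1)) i := fun i hi => hp (i + 1) (by omega)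
    rcases lt_trichotomy (s 2) 0 with h2 | h2 | h2
    · -- s 2 < 0 : remainders alternate in sign and grow
      have halt := alt_chain k (fun j => s (j + 1)) (fun j => p (j + 1)) hrel' hp'
        (Or.inl ⟨hc, h2⟩)
      have habs : |s 2| ≤ |s (k + 2)| := halt
      set r := s 0 % s 1 with hr
      have hrnn : 0 ≤ r := Int.emod_nonneg (s 0) hc.ne'
      rcases eq_or_lt_of_le hrnn with hr0 | hr0
      · have hz : eucl (k + 2) (s 1) r = 0 := by
          rw [← hr0]
          exact eucl_succ_zero (k + 1) (s 1)
        rw [hunf, hz]; exact abs_nonneg _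
      · have hrc : r < s 1 := Int.emod_lt_of_pos (s 0) hc
        have hle1 : eucl (k + 2) (s 1) r ≤ eucl 2 (s 1) r :=
          eucl_anti (by omega) (by omega) (s 1) r hrnn
        have hle2 : eucl 2 (s 1) r = s 1 % r := by
          rw [eucl_succ_of_ne 1 (s 1) hr0.ne', eucl_one]
        have hle3 : s 1 % r ≤ s 1 - r := int_emod_le_sub hr0 hrc
        have hge : s 1 - r ≤ -s 2 := neg_ge_of_emod hc h2 (hs2mod.trans hr.symm) hr0
        have : |s 2| = -s 2 := abs_of_neg h2
        rw [hunf]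
        calc eucl (k + 2) (s 1) r ≤ s 1 - r := by omega
          _ ≤ -s 2 := hge
          _ = |s 2| := this.symm
          _ ≤ |s (k + 1 + 1)| := habs
    · -- s 2 = 0 : the eucl value is 0
      have hz : s 0 % s 1 = 0 := by rw [← hs2mod, h2, Int.zero_emod]
      rw [hunf, hz, eucl_succ_zero (k + 1) (s 1)]
      exact abs_nonneg _
    · -- s 2 > 0 : apply induction hypothesis to the shifted chain
      have key := ih (fun j => s (j + 1)) (fun j => p (j + 1)) hrel' hp' hc h2
      rw [hunf, ← hs2mod]
      exact le_trans (eucl_emod_le (k + 2) (s 1) (s 2) hc h2.le) key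

/-- The Euclid chain `f` agrees with the abstract sequence `eucl`. -/
lemma euclid_eq_eucl {a b : ℤ} {m : ℕ} {f : ℕ → ℤ} (hf : EuclidChain a b m f) :
    ∀ (n i : ℕ), i + n ≤ m → f (i + n) = eucl n (f i) (f (i + 1)) := by
  obtain ⟨_, _, hrel, hnz, _⟩ := hf
  intro n
  induction n with
  | zero => intro i _; simp [eucl_zero]
  | succ n ih =>
    intro i hi
    have hne : f (i + 1) ≠ 0 := hnz (i + 1) (by omega)
    rw [eucl_succ_of_ne n (f i) hne, ← hrel i (by omega)]
    have := ih (i + 1) (by omega)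
    rw [show i + (n + 1) = (i + 1) + n by omega, this]

/-- If a division chain from positive `(a, b)` has all quotients after the first positive,
then its `k`-th remainder is at least the `(k+1)`-st remainder of the Euclidean chain
(which is `0` when `m = k`). -/
theorem stmt_14 (a b : ℤ) (ha : 0 < a) (hb : 0 < b) (k m : ℕ) (hk : 1 ≤ k)
    (q s : ℕ → ℤ) (hchain : DivChain a b k q s) (hq : ∀ i, 1 ≤ i → i < k → 0 < q i)
    (f : ℕ → ℤ) (hf : EuclidChain a b m f) (hmk : k ≤ m) :
    (if k = m then 0 else f (k + 2)) ≤ |s (k + 1)| := by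
  by_cases hkm : k = m
  · simpa [hkm] using abs_nonneg (s (k + 1))
  · have hklt : k < m := lt_of_le_of_ne hmk hkm
    rw [if_neg hkm]
    obtain ⟨hs0, hs1, hrel⟩ := hchain
    obtain ⟨hf0, hf1, hfrel, hfnz, hfz⟩ := hf
    -- if k + 2 = m + 1 the goal is trivial
    rcases Nat.lt_or_ge (k + 1) m with hk2 | hk2
    · -- k + 2 ≤ m
      have hm2 : 2 ≤ m := by omega
      have hf2 : f 2 = a % b := by
        have := hfrel 0 (by omega); rw [this, hf0, hf1]
      have hf2nz : f 2 ≠ 0 := hfnz 2 (by omega)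
      have hfk2 : f (k + 2) = eucl (k + 1) (f 1) (f 2) := by
        have := euclid_eq_eucl ⟨hf0, hf1, hfrel, hfnz, hfz⟩ (k + 1) 1 (by omega)
        rw [show 1 + (k + 1) = k + 2 by omega] at this
        exact this
      have hrnn : 0 ≤ a % b := Int.emod_nonneg a hb.ne'
      have hr0 : 0 < a % b := lt_of_le_of_ne hrnn (fun h => hf2nz (by omega))
      have hrb : a % b < b := Int.emod_lt_of_pos a hb
      -- the shifted chain
      have h0 : s 0 = q 0 * s 1 + s 2 := hrel 0 (by omega)
      have hs2mod : s 2 % b = a % b := by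
        conv_rhs => rw [show a = s 2 + b * q 0 by
          rw [← hs0, ← hs1]; linear_combination h0]
        rw [Int.add_mul_emod_self_left]
      have hrel' : ∀ i < k - 1, (fun j => s (j + 1)) i
          = (fun j => q (j + 1)) i * (fun j => s (j + 1)) (i + 1)
            + (fun j => s (j + 1)) (i + 2) := fun i hi => hrel (i + 1) (by omega)
      have hq' : ∀ i < k - 1, 1 ≤ (fun j => q (j + 1)) i :=
        fun i hi => hq (i + 1) (by omega) (by omega)
      have hsb : s 1 = b := hs1
      have hs1pos : 0 < s 1 := by rw [hs1]; exact hb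
      rcases lt_trichotomy (s 2) 0 with h2 | h2 | h2
      · -- s 2 < 0
        have halt := alt_chain (k - 1) (fun j => s (j + 1)) (fun j => q (j + 1))
          hrel' hq' (Or.inl ⟨hs1pos, h2⟩)
        rw [show k - 1 + 1 + 1 = k + 1 by omega] at halt
        have hge : b - a % b ≤ -s 2 := neg_ge_of_emod hb h2 (by omega) hr0
        have hle1 : eucl (k + 1) (f 1) (f 2) ≤ eucl 2 (f 1) (f 2) :=
          eucl_anti (by omega) (by omega) (f 1) (f 2) (by omega)
        have hle2 : eucl 2 (f 1) (f 2) = f 1 % f 2 := by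
          rw [eucl_succ_of_ne 1 (f 1) hf2nz, eucl_one]
        have hle3 : f 1 % f 2 ≤ f 1 - f 2 := by
          rw [hf1, hf2]; exact int_emod_le_sub hr0 hrb
        have habs : |s 2| = -s 2 := abs_of_neg h2
        rw [hfk2]
        calc eucl (k + 1) (f 1) (f 2) ≤ f 1 - f 2 := by omega
          _ ≤ -s 2 := by rw [hf1, hf2]; exact hge
          _ = |s 2| := habs.symm
          _ ≤ |s (k + 1)| := halt
      · -- s 2 = 0 : contradiction with f 2 ≠ 0
        exfalso
        apply hf2nz
        rw [hf2, ← hs2mod, h2, Int.zero_emod]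
      · -- s 2 > 0 : main lemma on shifted chain
        have key := main_lemma (k - 1) (fun j => s (j + 1)) (fun j => q (j + 1))
          hrel' hq' hs1pos h2
        have key' : eucl (k + 1) (s 1) (s 2) ≤ |s (k + 1)| := by
          have hkk : k - 1 + 2 = k + 1 := by omega
          have hkk2 : k - 1 + 1 + 1 = k + 1 := by omega
          simpa [hkk, hkk2] using key
        rw [hfk2, hf1, hf2, ← hs2mod, ← hsb]
        exact le_trans (eucl_emod_le (k + 1) (s 1) (s 2) hs1pos h2.le) key'
    · -- k + 2 = m + 1
      have : k + 2 = m + 1 := by omega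
      rw [this, hfz]
      exact abs_nonneg _
end

section
/- For every positive integer k there exist positive integers c, d such that no division chain in ℤ of length l ≤ k starting from (c,d) is terminating (i.e., has last remainder 0). In fact, consecutive Fibonacci numbers c = F_{2k+2}, d = F_{2k+1} work. -/
/-- Number of steps of the ordinary Euclidean algorithm. -/
def euclidLen : ℕ → ℕ → ℕ
  | _, 0 => 0
  | a, b + 1 => euclidLen (b + 1) (a % (b + 1)) + 1
termination_by a b => b
decreasing_by exact Nat.mod_lt _ (Nat.succ_pos b)

lemma euclidLen_zero (a : ℕ) : euclidLen a 0 = 0 := by simp [euclidLen]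

lemma euclidLen_eq (a b : ℕ) (hb : b ≠ 0) :
    euclidLen a b = euclidLen b (a % b) + 1 := by
  cases b with
  | zero => exact absurd rfl hb
  | succ n => rw [euclidLen]

/-- Case `2c < n` of the complement lemma. -/
lemma euclidLen_compl_lt (n c : ℕ) (h1 : 1 ≤ c) (h2 : 2 * c < n) :
    euclidLen n (n - c) = euclidLen n c + 1 := by
  have hnc : c < n - c := by omega
  have e1 : euclidLen n (n - c) = euclidLen (n - c) (n % (n - c)) + 1 :=
    euclidLen_eq n (n - c) (by omega)
  have hmod1 : n % (n - c) = c := by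
    rw [Nat.mod_eq_sub_mod (by omega : n - c ≤ n),
      Nat.sub_sub_self (by omega : c ≤ n)]
    exact Nat.mod_eq_of_lt hnc
  have e2 : euclidLen (n - c) c = euclidLen c ((n - c) % c) + 1 :=
    euclidLen_eq (n - c) c (by omega)
  have hmod2 : (n - c) % c = n % c := (Nat.mod_eq_sub_mod (by omega : c ≤ n)).symm
  have e3 : euclidLen n c = euclidLen c (n % c) + 1 := euclidLen_eq n c (by omega)
  rw [e1, hmod1, e2, hmod2, e3]

/-- Complement lemma: `E(n, c)` and `E(n, n-c)` differ by at most 1. -/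
lemma euclidLen_compl (n c : ℕ) (h1 : 1 ≤ c) (h2 : c < n) :
    euclidLen n c ≤ euclidLen n (n - c) + 1 := by
  rcases lt_trichotomy (2 * c) n with h | h | h
  · have := euclidLen_compl_lt n c h1 h
    omega
  · have : n - c = c := by omega
    rw [this]
    omega
  · have hd1 : 1 ≤ n - c := by omega
    have hd2 : 2 * (n - c) < n := by omega
    have := euclidLen_compl_lt n (n - c) hd1 hd2
    rw [Nat.sub_sub_self (by omega : c ≤ n)] at this
    omega

/-- Reducing the second argument mod the first can only shorten Euclid. -/
lemma euclidLen_mod_le (n m : ℕ) (hn : n ≠ 0) :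
    euclidLen n (m % n) ≤ euclidLen n m := by
  rcases Nat.lt_or_ge m n with h | h
  · rw [Nat.mod_eq_of_lt h]
  · by_cases h0 : m % n = 0
    · rw [h0, euclidLen_zero]; exact Nat.zero_le _
    · have hmn : n < m := by
        rcases Nat.lt_or_ge n m with h' | h'
        · exact h'
        · have : m = n := le_antisymm h' h
          rw [this, Nat.mod_self] at h0
          exact absurd rfl h0
      have e1 : euclidLen n m = euclidLen m (n % m) + 1 := euclidLen_eq n m (by omega)
      have e2 : n % m = n := Nat.mod_eq_of_lt hmn
      have e3 : euclidLen m n = euclidLen n (m % n) + 1 := euclidLen_eq m n hn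
      rw [e1, e2, e3]; omega

/-- Key lemma: one division step with an arbitrary integer quotient decreases
the Euclid length by at most 2. -/
lemma euclidLen_key (a b r : ℤ) (hb : b ≠ 0) (hdvd : b ∣ (a - r)) :
    euclidLen a.natAbs b.natAbs ≤ euclidLen b.natAbs r.natAbs + 2 := by
  set n := b.natAbs with hn
  set A := a.natAbs with hA
  set R := r.natAbs with hR
  have hn0 : n ≠ 0 := Int.natAbs_ne_zero.mpr hb
  set c := A % n with hc
  have hcn : c < n := Nat.mod_lt _ (Nat.pos_of_ne_zero hn0)
  have e1 : euclidLen A n = euclidLen n c + 1 := euclidLen_eq _ _ hn0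
  have hmodle := euclidLen_mod_le n R hn0
  have hdvd' : (n : ℤ) ∣ (a - r) := (Int.natAbs_dvd).mpr hdvd
  -- either n ∣ A - R or n ∣ A + R (over ℤ)
  have hcases : ((n : ℤ) ∣ ((A : ℤ) - (R : ℤ))) ∨ ((n : ℤ) ∣ ((A : ℤ) + (R : ℤ))) := by
    rcases Int.natAbs_eq a with ha | ha <;> rcases Int.natAbs_eq r with hr | hr <;>
      rw [ha, hr] at hdvd'
    · left; exact hdvd'
    · right
      have e : (A : ℤ) + (R : ℤ) = (A : ℤ) - (-(R : ℤ)) := by ring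
      rw [e]; exact hdvd'
    · right
      have e : (A : ℤ) + (R : ℤ) = -(-(A : ℤ) - (R : ℤ)) := by ring
      rw [e]; exact dvd_neg.mpr hdvd'
    · left
      have e : (A : ℤ) - (R : ℤ) = -(-(A : ℤ) - (-(R : ℤ))) := by ring
      rw [e]; exact dvd_neg.mpr hdvd'
  rcases hcases with h | h
  · have h2 : R ≡ A [MOD n] := (Nat.modEq_iff_dvd).mpr h
    have h3 : R % n = A % n := h2
    rw [← hc] at h3
    rw [h3] at hmodle
    omega
  · have h2 : n ∣ (A + R) := by
      have e : ((A + R : ℕ) : ℤ) = (A : ℤ) + (R : ℤ) := by push_cast; ring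
      exact Int.natCast_dvd_natCast.mp (by rw [e]; exact h)
    by_cases hc0 : c = 0
    · rw [e1, hc0, euclidLen_zero]; omega
    · have h1 : (A + R) % n = 0 := by
        obtain ⟨t, ht⟩ := h2
        rw [ht]
        exact Nat.mul_mod_right n t
      have hx : (c + R % n) % n = 0 := by
        rw [hc, ← Nat.add_mod]; exact h1
      have hxlt : R % n < n := Nat.mod_lt _ (Nat.pos_of_ne_zero hn0)
      have hRn : R % n = n - c := by
        rcases Nat.lt_or_ge (c + R % n) n with hlt | hge
        · rw [Nat.mod_eq_of_lt hlt] at hx; omega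
        · rw [Nat.mod_eq_sub_mod hge, Nat.mod_eq_of_lt (by omega)] at hx
          omega
      have hcompl := euclidLen_compl n c (by omega) hcn
      rw [hRn] at hmodle
      omega

/-- Euclid length of consecutive Fibonacci numbers. -/
lemma euclidLen_fib (n : ℕ) :
    euclidLen (Nat.fib (n + 3)) (Nat.fib (n + 2)) = n + 1 := by
  induction n with
  | zero =>
    have h2 : Nat.fib 2 = 1 := by decide
    have h3 : Nat.fib 3 = 2 := by decide
    show euclidLen (Nat.fib 3) (Nat.fib 2) = 1
    rw [h2, h3, euclidLen_eq 2 1 one_ne_zero,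
      show 2 % 1 = 0 from rfl, euclidLen_zero]
  | succ m ih =>
    have hpos : Nat.fib (m + 3) ≠ 0 := by
      have := Nat.fib_pos.mpr (by omega : 0 < m + 3)
      omega
    have hlt : Nat.fib (m + 2) < Nat.fib (m + 3) :=
      Nat.fib_lt_fib_succ (by omega : 2 ≤ m + 2)
    have hadd : Nat.fib (m + 4) = Nat.fib (m + 2) + Nat.fib (m + 3) := by
      rw [show m + 4 = (m + 2) + 2 by ring, Nat.fib_add_two]
    have hmod : Nat.fib (m + 4) % Nat.fib (m + 3) = Nat.fib (m + 2) := by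
      rw [hadd, Nat.add_mod_right]
      exact Nat.mod_eq_of_lt hlt
    rw [show m + 1 + 3 = m + 4 by ring, show m + 1 + 2 = m + 3 by ring,
      euclidLen_eq _ _ hpos, hmod, ih]

/-- Any terminating division chain of length `l` satisfies
`E(|s 0|, |s 1|) + 1 ≤ 2 l`, provided `s 1 ≠ 0`. -/
lemma chain_bound (l : ℕ) (hl : 1 ≤ l) :
    ∀ q s : ℕ → ℤ, (∀ i < l, s i = q i * s (i + 1) + s (i + 2)) →
      s 1 ≠ 0 → s (l + 1) = 0 →
      euclidLen (s 0).natAbs (s 1).natAbs + 1 ≤ 2 * l := by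
  induction l with
  | zero => omega
  | succ m ih =>
    intro q s hrec h1 hterm
    by_cases hs2 : s 2 = 0
    · -- then s 1 divides s 0, Euclid length is 1
      have h0 : s 0 = q 0 * s 1 + s 2 := hrec 0 (by omega)
      have hdvd : s 1 ∣ s 0 := ⟨q 0, by rw [h0, hs2]; ring⟩
      have hdvd' : (s 1).natAbs ∣ (s 0).natAbs := Int.natAbs_dvd_natAbs.mpr hdvd
      have hn0 : (s 1).natAbs ≠ 0 := Int.natAbs_ne_zero.mpr h1
      have hmod : (s 0).natAbs % (s 1).natAbs = 0 := by
        obtain ⟨t, ht⟩ := hdvd'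
        rw [ht]
        exact Nat.mul_mod_right _ t
      rw [euclidLen_eq _ _ hn0, hmod, euclidLen_zero]
      omega
    · have hm : 1 ≤ m := by
        by_contra hm0
        have : m = 0 := by omega
        rw [this] at hterm
        exact hs2 hterm
      have ihx := ih hm (fun i => q (i + 1)) (fun i => s (i + 1))
        (fun i hi => hrec (i + 1) (by omega)) hs2 (by simpa using hterm)
      have hkey : euclidLen (s 0).natAbs (s 1).natAbs ≤
          euclidLen (s 1).natAbs (s 2).natAbs + 2 := by
        apply euclidLen_key _ _ _ h1
        exact ⟨q 0, by have := hrec 0 (by omega); linarith⟩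
      have ihx' : euclidLen (s 1).natAbs (s 2).natAbs + 1 ≤ 2 * m := by
        simpa using ihx
      omega

/-- For every `k ≥ 1` there are positive integers `c, d` (namely the consecutive
Fibonacci numbers `F_{2k+2}` and `F_{2k+1}`) such that no division chain in `ℤ` of
length `l ≤ k` starting from `(c, d)` is terminating. -/
theorem stmt_16 (k : ℕ) (hk : 1 ≤ k) :
    ∃ c d : ℤ, 0 < c ∧ 0 < d ∧
      c = (Nat.fib (2 * k + 2) : ℤ) ∧ d = (Nat.fib (2 * k + 1) : ℤ) ∧
      ∀ l : ℕ, 1 ≤ l → l ≤ k → ∀ q s : ℕ → ℤ,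
        DivChain c d l q s → s (l + 1) ≠ 0 := by
  refine ⟨(Nat.fib (2 * k + 2) : ℤ), (Nat.fib (2 * k + 1) : ℤ), ?_, ?_, rfl, rfl, ?_⟩
  · exact_mod_cast Nat.fib_pos.mpr (by omega)
  · exact_mod_cast Nat.fib_pos.mpr (by omega)
  · intro l hl1 hlk q s hchain hterm
    obtain ⟨h0, h1, hrec⟩ := hchain
    have hd : s 1 ≠ 0 := by
      rw [h1]
      have hp := Nat.fib_pos.mpr (by omega : 0 < 2 * k + 1)
      exact Int.natCast_ne_zero.mpr hp.ne'
    have hb := chain_bound l hl1 q s hrec hd hterm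
    have hE : euclidLen (s 0).natAbs (s 1).natAbs = 2 * k := by
      rw [h0, h1, Int.natAbs_natCast, Int.natAbs_natCast]
      have := euclidLen_fib (2 * (k - 1) + 1)
      have e2 : 2 * (k - 1) + 1 + 3 = 2 * k + 2 := by omega
      have e3 : 2 * (k - 1) + 1 + 2 = 2 * k + 1 := by omega
      rw [e2, e3] at this
      omega
    omega
end
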